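/- In every reachable state of TMS3, for every transaction t that has completed its begin operation (status_t ∉ {notStarted, beginPending}), there exists an index n with validIdx_t(n), i.e., beginIdx_t ≤ n ≤ maxIdx and rdSet_t ⊆ memSeq(n). -/
import Mathlib


namespace TMS

/-- The status of a transaction in TMS2/TMS3. -/
inductive Status (A V : Type) where
  | notStarted | beginPending | ready
  | doRead (a : A) | readResp (v : V)
  | doWrite (a : A) (v : V) | writeResp
  | doCommit | commitResp | committed | aborted
  deriving DecidableEq

/-- The state of the TMS2/TMS3 automata. -/
structure State (T A V : Type) where
  /-- The (nonempty) sequence of memory snapshots, indexed from 0. -/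
  memSeq : List (A → V)
  status : T → Status A V
  beginIdx : T → ℕ
  rdSet : T → A → Option V
  wrSet : T → A → Option V

/-- External and internal actions of TMS2/TMS3. -/
inductive Action (T A V : Type) where
  | invBegin (t : T)  | respBegin (t : T)
  | invRead (t : T) (a : A) | respRead (t : T) (v : V)
  | invWrite (t : T) (a : A) (v : V) | respWrite (t : T)
  | invCommit (t : T) | respCommit (t : T)
  | respAbort (t : T)
  | doRead (t : T) (a : A) (n : ℕ)
  | doWrite (t : T) (a : A) (v : V)
  | doCommitReadOnly (t : T) (n : ℕ)
  | doCommitWriter (t : T)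
  deriving DecidableEq

/-- Is the action external (an invocation or a response)? -/
def Action.isExternal {T A V : Type} : Action T A V → Bool
  | .doRead _ _ _ => false
  | .doWrite _ _ _ => false
  | .doCommitReadOnly _ _ => false
  | .doCommitWriter _ => false
  | _ => true

variable {T A V : Type} [DecidableEq T] [DecidableEq A] [Zero V]

/-- `memSeq(n)`. -/
def mems (s : State T A V) (n : ℕ) : A → V := s.memSeq.getD n (fun _ => (0 : V))

/-- The greatest index of `memSeq`. -/
def maxIdx (s : State T A V) : ℕ := s.memSeq.length - 1

/-- The most recent memory snapshot. -/
def latestMem (s : State T A V) : A → V := mems s (maxIdx s)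

/-- `f ⊆ σ`: the memory `σ` agrees with the partial map `f` on its domain. -/
def Agrees (f : A → Option V) (σ : A → V) : Prop :=
  ∀ a v, f a = some v → σ a = v

/-- `validIdx_t(n)`. -/
def validIdx (s : State T A V) (t : T) (n : ℕ) : Prop :=
  s.beginIdx t ≤ n ∧ n ≤ maxIdx s ∧ Agrees (s.rdSet t) (mems s n)

/-- Transitions of TMS2/TMS3, parametrised by the extra precondition `roPre`
of the internal read-only commit action: `roPre = validIdx` gives TMS2 and the
trivial `roPre` gives TMS3. -/
inductive Step (roPre : State T A V → T → ℕ → Prop) :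
    State T A V → Action T A V → State T A V → Prop where
  | invBegin (s : State T A V) (t : T) : s.status t = .notStarted →
      Step roPre s (.invBegin t)
        { s with status := Function.update s.status t .beginPending,
                 beginIdx := Function.update s.beginIdx t (maxIdx s) }
  | respBegin (s : State T A V) (t : T) : s.status t = .beginPending →
      Step roPre s (.respBegin t) { s with status := Function.update s.status t .ready }
  | invRead (s : State T A V) (t : T) (a : A) : s.status t = .ready →
      Step roPre s (.invRead t a) { s with status := Function.update s.status t (.doRead a) }
  | respRead (s : State T A V) (t : T) (v : V) : s.status t = .readResp v →
      Step roPre s (.respRead t v) { s with status := Function.update s.status t .ready }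
  | invWrite (s : State T A V) (t : T) (a : A) (v : V) : s.status t = .ready →
      Step roPre s (.invWrite t a v)
        { s with status := Function.update s.status t (.doWrite a v) }
  | respWrite (s : State T A V) (t : T) : s.status t = .writeResp →
      Step roPre s (.respWrite t) { s with status := Function.update s.status t .ready }
  | invCommit (s : State T A V) (t : T) : s.status t = .ready →
      Step roPre s (.invCommit t) { s with status := Function.update s.status t .doCommit }
  | respCommit (s : State T A V) (t : T) : s.status t = .commitResp →
      Step roPre s (.respCommit t) { s with status := Function.update s.status t .committed }
  | respAbort (s : State T A V) (t : T) :
      s.status t ∉ ([.notStarted, .ready, .commitResp, .committed, .aborted] :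
        List (Status A V)) →
      Step roPre s (.respAbort t) { s with status := Function.update s.status t .aborted }
  | doReadLocal (s : State T A V) (t : T) (a : A) (n : ℕ) (v : V) :
      s.status t = .doRead a → s.wrSet t a = some v →
      Step roPre s (.doRead t a n) { s with status := Function.update s.status t (.readResp v) }
  | doReadGlobal (s : State T A V) (t : T) (a : A) (n : ℕ) :
      s.status t = .doRead a → s.wrSet t a = none → validIdx s t n →
      Step roPre s (.doRead t a n)
        { s with status := Function.update s.status t (.readResp (mems s n a)),
                 rdSet := Function.update s.rdSet t
                            (Function.update (s.rdSet t) a (some (mems s n a))) }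
  | doWrite (s : State T A V) (t : T) (a : A) (v : V) :
      s.status t = .doWrite a v →
      Step roPre s (.doWrite t a v)
        { s with status := Function.update s.status t .writeResp,
                 wrSet := Function.update s.wrSet t
                            (Function.update (s.wrSet t) a (some v)) }
  | doCommitReadOnly (s : State T A V) (t : T) (n : ℕ) :
      s.status t = .doCommit → (∀ a, s.wrSet t a = none) → roPre s t n →
      Step roPre s (.doCommitReadOnly t n)
        { s with status := Function.update s.status t .commitResp }
  | doCommitWriter (s : State T A V) (t : T) :
      s.status t = .doCommit → Agrees (s.rdSet t) (latestMem s) →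
      Step roPre s (.doCommitWriter t)
        { s with status := Function.update s.status t .commitResp,
                 memSeq := s.memSeq ++ [fun a => (s.wrSet t a).getD (latestMem s a)] }

/-- The TMS2 transition relation: the read-only commit requires a valid index. -/
def TMS2Step : State T A V → Action T A V → State T A V → Prop :=
  Step (fun s t n => validIdx s t n)

/-- The TMS3 transition relation: the read-only commit has no valid-index
precondition. -/
def TMS3Step : State T A V → Action T A V → State T A V → Prop :=
  Step (fun _ _ _ => True)

/-- Initial states: one initial all-zero memory snapshot, all transactions not
started, empty read and write sets. -/
def Init (s : State T A V) : Prop :=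
  s.memSeq = [fun _ => (0 : V)] ∧ s.status = (fun _ => Status.notStarted) ∧
  s.rdSet = (fun _ _ => none) ∧ s.wrSet = (fun _ _ => none)

/-- Executions of an automaton with transition relation `step`, carrying the
trace of external actions performed so far. -/
inductive Exec (step : State T A V → Action T A V → State T A V → Prop) :
    State T A V → List (Action T A V) → Prop where
  | init (s : State T A V) : Init s → Exec step s []
  | ext (s : State T A V) (tr : List (Action T A V)) (a : Action T A V) (s' : State T A V) :
      Exec step s tr → step s a s' → a.isExternal = true → Exec step s' (tr ++ [a])
  | int (s : State T A V) (tr : List (Action T A V)) (a : Action T A V) (s' : State T A V) :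
      Exec step s tr → step s a s' → a.isExternal = false → Exec step s' tr

/-- The traces (sequences of external actions) of an automaton. -/
def traces (step : State T A V → Action T A V → State T A V → Prop) :
    Set (List (Action T A V)) :=
  { tr | ∃ s : State T A V, Exec step s tr }

/-- A state is reachable if it appears in some execution. -/
def Reachable (step : State T A V → Action T A V → State T A V → Prop)
    (s : State T A V) : Prop :=
  ∃ tr, Exec step s tr

/-- Strengthened invariant. -/
def Inv (s : State T A V) : Prop :=
  s.memSeq ≠ [] ∧
  ∀ t, (s.status t = .notStarted → ∀ a, s.rdSet t a = none) ∧
       (s.status t ≠ .notStarted → ∃ n, validIdx s t n)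

lemma init_inv {s : State T A V} (h : Init s) : Inv s := by
  obtain ⟨h1, h2, h3, h4⟩ := h
  refine ⟨by rw [h1]; simp, fun t => ⟨fun _ a => by rw [h3], fun hne => absurd (by rw [h2]) hne⟩⟩

lemma validIdx_append {s : State T A V} {t : T} {n : ℕ} (f : A → V)
    (hne : s.memSeq ≠ []) (h : validIdx s t n) :
    validIdx { s with memSeq := s.memSeq ++ [f] } t n := by
  obtain ⟨h1, h2, h3⟩ := h
  have hlen : 1 ≤ s.memSeq.length := List.length_pos_iff.mpr hne
  have hlt : n < s.memSeq.length := by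
    simp [maxIdx] at h2; omega
  refine ⟨h1, ?_, ?_⟩
  · simp only [maxIdx, List.length_append]; omega
  · intro a v hv
    have := h3 a v hv
    simpa [mems, List.getD_eq_getElem?_getD, List.getElem?_append_left hlt] using this

lemma inv_of_eqs {s s' : State T A V} (hInv : Inv s)
    (hm : s'.memSeq = s.memSeq) (hb : s'.beginIdx = s.beginIdx) (hr : s'.rdSet = s.rdSet)
    (hst : ∀ t, s'.status t = .notStarted → s.status t = .notStarted)
    (hst2 : ∀ t, s'.status t ≠ .notStarted → s.status t ≠ .notStarted) :
    Inv s' := by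
  obtain ⟨hne, h⟩ := hInv
  refine ⟨by rw [hm]; exact hne, fun t => ⟨fun hns a => by rw [hr]; exact (h t).1 (hst t hns) a,
    fun hns => ?_⟩⟩
  obtain ⟨n, hn⟩ := (h t).2 (hst2 t hns)
  exact ⟨n, by simpa only [validIdx, maxIdx, mems, hm, hb, hr] using hn⟩

lemma step_inv {s s' : State T A V} {a : Action T A V}
    (hstep : TMS3Step s a s') (hInv : Inv s) : Inv s' := by
  have hupd : ∀ (t t' : T) (st : Status A V), st ≠ .notStarted →
      s.status t ≠ .notStarted →
      (Function.update s.status t st t' = .notStarted → s.status t' = .notStarted) ∧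
      (Function.update s.status t st t' ≠ .notStarted → s.status t' ≠ .notStarted) := by
    intro t t' st hst hold
    by_cases ht : t' = t
    · subst ht; simp [Function.update]; exact ⟨fun h => absurd h hst, fun _ => hold⟩
    · simp [Function.update, ht]
  cases hstep with
  | invBegin t hpre =>
      obtain ⟨hne, h⟩ := hInv
      refine ⟨hne, fun t' => ?_⟩
      by_cases ht : t' = t
      · subst ht
        refine ⟨fun hns => by simp [Function.update] at hns, fun _ => ?_⟩
        refine ⟨maxIdx s, by simp [validIdx, Function.update, maxIdx, mems], ?_, ?_⟩
        · simp [maxIdx]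
        · intro a v hv
          have := (h t').1 hpre a
          simp only at hv
          rw [this] at hv; cases hv
      · constructor
        · intro hns a
          exact (h t').1 (by simpa [Function.update, ht] using hns) a
        · intro hns
          obtain ⟨n, hn⟩ := (h t').2 (by simpa [Function.update, ht] using hns)
          exact ⟨n, by simpa only [validIdx, maxIdx, mems,
            Function.update_of_ne ht] using hn⟩
  | respBegin t hpre =>
      exact inv_of_eqs hInv rfl rfl rfl
        (fun t' => (hupd t t' _ (by simp) (by rw [hpre]; simp)).1)
        (fun t' => (hupd t t' _ (by simp) (by rw [hpre]; simp)).2)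
  | invRead t a hpre =>
      exact inv_of_eqs hInv rfl rfl rfl
        (fun t' => (hupd t t' _ (by simp) (by rw [hpre]; simp)).1)
        (fun t' => (hupd t t' _ (by simp) (by rw [hpre]; simp)).2)
  | respRead t v hpre =>
      exact inv_of_eqs hInv rfl rfl rfl
        (fun t' => (hupd t t' _ (by simp) (by rw [hpre]; simp)).1)
        (fun t' => (hupd t t' _ (by simp) (by rw [hpre]; simp)).2)
  | invWrite t a v hpre =>
      exact inv_of_eqs hInv rfl rfl rfl
        (fun t' => (hupd t t' _ (by simp) (by rw [hpre]; simp)).1)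
        (fun t' => (hupd t t' _ (by simp) (by rw [hpre]; simp)).2)
  | respWrite t hpre =>
      exact inv_of_eqs hInv rfl rfl rfl
        (fun t' => (hupd t t' _ (by simp) (by rw [hpre]; simp)).1)
        (fun t' => (hupd t t' _ (by simp) (by rw [hpre]; simp)).2)
  | invCommit t hpre =>
      exact inv_of_eqs hInv rfl rfl rfl
        (fun t' => (hupd t t' _ (by simp) (by rw [hpre]; simp)).1)
        (fun t' => (hupd t t' _ (by simp) (by rw [hpre]; simp)).2)
  | respCommit t hpre =>
      exact inv_of_eqs hInv rfl rfl rfl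
        (fun t' => (hupd t t' _ (by simp) (by rw [hpre]; simp)).1)
        (fun t' => (hupd t t' _ (by simp) (by rw [hpre]; simp)).2)
  | respAbort t hpre =>
      have hold : s.status t ≠ .notStarted := by
        intro hc; exact hpre (by rw [hc]; simp)
      exact inv_of_eqs hInv rfl rfl rfl
        (fun t' => (hupd t t' _ (by simp) hold).1)
        (fun t' => (hupd t t' _ (by simp) hold).2)
  | doReadLocal t a n v hpre hw =>
      exact inv_of_eqs hInv rfl rfl rfl
        (fun t' => (hupd t t' _ (by simp) (by rw [hpre]; simp)).1)
        (fun t' => (hupd t t' _ (by simp) (by rw [hpre]; simp)).2)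
  | doReadGlobal t a n hpre hw hv =>
      obtain ⟨hne, h⟩ := hInv
      refine ⟨hne, fun t' => ?_⟩
      by_cases ht : t' = t
      · subst ht
        refine ⟨fun hns => by simp [Function.update] at hns, fun _ => ?_⟩
        obtain ⟨h1, h2, h3⟩ := hv
        refine ⟨n, h1, h2, ?_⟩
        intro a' v' hv'
        simp only [Function.update_self] at hv'
        by_cases ha : a' = a
        · subst ha
          rw [Function.update_self] at hv'
          cases hv'; rfl
        · rw [Function.update_of_ne ha] at hv'
          exact h3 a' v' hv'
      · constructor
        · intro hns a'
          simp only [Function.update_of_ne ht]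
          exact (h t').1 (by simpa [Function.update, ht] using hns) a'
        · intro hns
          obtain ⟨m, hm⟩ := (h t').2 (by simpa [Function.update, ht] using hns)
          exact ⟨m, by simpa only [validIdx, maxIdx, mems, Function.update_of_ne ht] using hm⟩
  | doWrite t a v hpre =>
      exact inv_of_eqs hInv rfl rfl rfl
        (fun t' => (hupd t t' _ (by simp) (by rw [hpre]; simp)).1)
        (fun t' => (hupd t t' _ (by simp) (by rw [hpre]; simp)).2)
  | doCommitReadOnly t n hpre hw hro =>
      exact inv_of_eqs hInv rfl rfl rfl
        (fun t' => (hupd t t' _ (by simp) (by rw [hpre]; simp)).1)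
        (fun t' => (hupd t t' _ (by simp) (by rw [hpre]; simp)).2)
  | doCommitWriter t hpre hagree =>
      obtain ⟨hne, h⟩ := hInv
      refine ⟨by simp [hne], fun t' => ?_⟩
      have hstat := hupd t t' Status.commitResp (by simp) (by rw [hpre]; simp)
      constructor
      · intro hns a
        exact (h t').1 (hstat.1 hns) a
      · intro hns
        obtain ⟨n, hn⟩ := (h t').2 (hstat.2 hns)
        exact ⟨n, validIdx_append _ hne hn⟩

lemma exec_inv {s : State T A V} {tr : List (Action T A V)}
    (h : Exec TMS3Step s tr) : Inv s := by
  induction h with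
  | init s hinit => exact init_inv hinit
  | ext s tr a s' _ hstep _ ih => exact step_inv hstep ih
  | int s tr a s' _ hstep _ ih => exact step_inv hstep ih

end TMS

/-- Invariant of TMS3: in every reachable state, every in-flight transaction
(that has completed its begin) has some valid index `n`. -/
theorem tms3_valid_index_invariant {T A V : Type}
    [DecidableEq T] [DecidableEq A] [Zero V]
    (s : TMS.State T A V) (hreach : TMS.Reachable TMS.TMS3Step s) (t : T)
    (h1 : s.status t ≠ .notStarted) (h2 : s.status t ≠ .beginPending) :
    ∃ n : ℕ, TMS.validIdx s t n := by
  obtain ⟨tr, hexec⟩ := hreach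
  exact ((TMS.exec_inv hexec).2 t).2 h1
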